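/- arXiv:2305.09097 — 2 statements merged into one kernel-verified Lean document; each statement's English description precedes it below -/
import Mathlib

section
/- If the components X_1,...,X_n of X are mutually independent, then MRCov_{(p,q)}(X) is the diagonal matrix diag(RV_{(p_1,q_1)}(X_1), ..., RV_{(p_n,q_n)}(X_n)), where RV_{(p_k,q_k)}(X_k) := E[(X_k − RVaR_{(p_k,q_k)}(X_k))² | VaR_{p_k}(X_k) ≤ X_k ≤ VaR_{q_k}(X_k)] is the univariate range variance. -/
/-!
Conditioning on the box `A = ⋂ k, {X k ∈ I k}` keeps the coordinates independent, because
`μ (A ∩ ⋂ k, {X k ∈ B k}) = ∏ k, μ {X k ∈ I k ∩ B k}`; by the same factorisation the law of `X k`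
given `A` is its law given `{X k ∈ I k}`. So the conditional covariances off the diagonal vanish,
and the diagonal ones are the univariate range variances.
-/

open MeasureTheory ProbabilityTheory Set

namespace ProbabilityTheory

lemma integral_cond_eq_setIntegral_div {Ω : Type*} {mΩ : MeasurableSpace Ω} (μ : Measure Ω)
    (s : Set Ω) (f : Ω → ℝ) :
    ∫ ω, f ω ∂μ[|s] = (∫ ω in s, f ω ∂μ) / (μ s).toReal := by
  rw [cond, integral_smul_measure, ENNReal.toReal_inv, smul_eq_mul, inv_mul_eq_div]

section Rectangle

variable {ι Ω β : Type*} {mΩ : MeasurableSpace Ω} {mβ : MeasurableSpace β}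
  {μ : Measure Ω} {X : ι → Ω → β} {t : ι → Set β}

lemma iIndepFun.prodMk_self (h : iIndepFun X μ) : iIndepFun (fun i ω ↦ (X i ω, X i ω)) μ :=
  h.comp (fun _ x ↦ (x, x)) fun _ ↦ measurable_id.prodMk measurable_id

variable [Finite ι]

lemma iIndepFun.cond_iInter_preimage (h : iIndepFun X μ) (hX : ∀ i, Measurable (X i))
    (ht : ∀ i, MeasurableSet (t i)) (hpos : ∀ i, μ (X i ⁻¹' t i) ≠ 0) :
    iIndepFun X μ[|⋂ i, X i ⁻¹' t i] :=
  h.prodMk_self.cond hX hpos ht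

lemma iIndepFun.identDistrib_cond_iInter_preimage (h : iIndepFun X μ)
    (hX : ∀ i, Measurable (X i)) (ht : ∀ i, MeasurableSet (t i))
    (hpos : ∀ i, μ (X i ⁻¹' t i) ≠ 0) (i : ι) :
    IdentDistrib (X i) (X i) μ[|⋂ j, X j ⁻¹' t j] μ[|X i ⁻¹' t i] where
  aemeasurable_fst := (hX i).aemeasurable
  aemeasurable_snd := (hX i).aemeasurable
  map_eq := by
    ext B hB
    rw [Measure.map_apply (hX i) hB, Measure.map_apply (hX i) hB]
    simpa using cond_iInter (s := {i}) (f := fun _ ↦ X i ⁻¹' B) hX h.prodMk_self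
      (fun j hj ↦ by rw [Finset.mem_singleton.1 hj]; exact ⟨B, hB, rfl⟩) (fun j _ ↦ hpos j) ht

end Rectangle

end ProbabilityTheory

theorem mrcov_independent_components_general
    {Ω : Type*} [MeasurableSpace Ω] (μ : Measure Ω)
    {n : ℕ} (X : Ω → Fin n → ℝ)
    (hMeas : ∀ k, Measurable (fun ω => X ω k))
    (hIndep : iIndepFun
      (fun k ω => X ω k) μ)
    (p q : Fin n → ℝ)
    (VaR : (Ω → ℝ) → ℝ → ℝ)
    (A : Set Ω) (Ak : Fin n → Set Ω)
    (hAk : ∀ k, Ak k = {ω | VaR (fun ω' => X ω' k) (p k) ≤ X ω k ∧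
        X ω k ≤ VaR (fun ω' => X ω' k) (q k)})
    (hA : A = ⋂ k, Ak k)
    (hposk : ∀ k, 0 < μ (Ak k))
    (m : Fin n → ℝ)
    (hm : ∀ k, m k = (∫ ω in A, X ω k ∂μ) / (μ A).toReal)
    (RVaR RV : Fin n → ℝ)
    (hRVaR : ∀ k, RVaR k = (∫ ω in Ak k, X ω k ∂μ) / (μ (Ak k)).toReal)
    (hRV : ∀ k, RV k = (∫ ω in Ak k, (X ω k - RVaR k) ^ 2 ∂μ) / (μ (Ak k)).toReal) :
    ∀ i j, (∫ ω in A, (X ω i - m i) * (X ω j - m j) ∂μ) / (μ A).toReal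
        = if i = j then RV i else 0 := by
  set t : Fin n → Set ℝ := fun k ↦ Icc (VaR (fun ω ↦ X ω k) (p k)) (VaR (fun ω ↦ X ω k) (q k))
  have hAk' : ∀ k, Ak k = (fun ω ↦ X ω k) ⁻¹' t k := hAk
  have hA' : A = ⋂ k, (fun ω ↦ X ω k) ⁻¹' t k := hA.trans (iInter_congr hAk')
  have ht : ∀ k, MeasurableSet (t k) := fun k ↦ measurableSet_Icc
  have hpos : ∀ k, μ ((fun ω ↦ X ω k) ⁻¹' t k) ≠ 0 := fun k ↦ hAk' k ▸ (hposk k).ne'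
  have hνindep : iIndepFun (fun k ω ↦ X ω k) μ[|A] :=
    hA' ▸ hIndep.cond_iInter_preimage hMeas ht hpos
  have hL2 : ∀ k, MemLp (fun ω ↦ X ω k) 2 μ[|A] := fun k ↦
    memLp_of_bounded (ae_cond_mem (hA' ▸ .iInter fun k ↦ hMeas k (ht k)) |>.mono
      fun ω hω ↦ by rw [hA'] at hω; exact mem_iInter.1 hω k) (hMeas k).aestronglyMeasurable 2
  have hmean : ∀ k, m k = μ[|A][fun ω ↦ X ω k] := fun k ↦
    (hm k).trans (integral_cond_eq_setIntegral_div μ A _).symm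
  intro i j
  rw [← integral_cond_eq_setIntegral_div, hmean i, hmean j]
  change cov[fun ω ↦ X ω i, fun ω ↦ X ω j; μ[|A]] = _
  split_ifs with hij
  · subst hij
    rw [covariance_self (hMeas i).aemeasurable, hA',
      (hIndep.identDistrib_cond_iInter_preimage hMeas ht hpos i).variance_eq,
      variance_eq_integral (hMeas i).aemeasurable, hRV, hRVaR, ← hAk',
      integral_cond_eq_setIntegral_div, integral_cond_eq_setIntegral_div]
  · exact (hνindep.indepFun hij).covariance_eq_zero (hL2 i) (hL2 j)

/-- If the components of `X` are mutually independent, then the multivariate range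
covariance is the diagonal matrix of the univariate range variances. -/
theorem mrcov_independent_components
    {Ω : Type*} [MeasurableSpace Ω] (μ : Measure Ω) [IsProbabilityMeasure μ]
    {n : ℕ} (X : Ω → Fin n → ℝ)
    (hX : ∀ k, Integrable (fun ω => X ω k) μ)
    (hX2 : ∀ i j, Integrable (fun ω => X ω i * X ω j) μ)
    (hMeas : ∀ k, Measurable (fun ω => X ω k))
    (hIndep : iIndepFun
      (fun k ω => X ω k) μ)
    (p q : Fin n → ℝ) (hp : ∀ k, 0 < p k) (hq : ∀ k, q k < 1) (hpq : ∀ k, p k < q k)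
    (VaR : (Ω → ℝ) → ℝ → ℝ)
    (A : Set Ω) (Ak : Fin n → Set Ω)
    (hAk : ∀ k, Ak k = {ω | VaR (fun ω' => X ω' k) (p k) ≤ X ω k ∧
        X ω k ≤ VaR (fun ω' => X ω' k) (q k)})
    (hA : A = ⋂ k, Ak k)
    (hpos : 0 < μ A) (hposk : ∀ k, 0 < μ (Ak k))
    (m : Fin n → ℝ)
    (hm : ∀ k, m k = (∫ ω in A, X ω k ∂μ) / (μ A).toReal)
    (RVaR RV : Fin n → ℝ)
    (hRVaR : ∀ k, RVaR k = (∫ ω in Ak k, X ω k ∂μ) / (μ (Ak k)).toReal)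
    (hRV : ∀ k, RV k = (∫ ω in Ak k, (X ω k - RVaR k) ^ 2 ∂μ) / (μ (Ak k)).toReal) :
    ∀ i j, (∫ ω in A, (X ω i - m i) * (X ω j - m j) ∂μ) / (μ A).toReal
        = if i = j then RV i else 0 :=
  mrcov_independent_components_general μ X hMeas hIndep p q VaR A Ak hAk hA hposk m hm RVaR RV hRVaR
    hRV
end

section
/- Under the setup of the univariate elliptical RVaR theorem, the range variance satisfies RV_{(p,q)}(X) = (σ²/F_Y(η_p,η_q))·{λ + (c₁/c₁*)·F_{Y*}(η_p,η_q) − δ²·/F_Y(η_p,η_q)}, where λ = c₁[η_p Ḡ(η_p²/2) − η_q Ḡ(η_q²/2)], δ = c₁[Ḡ(η_p²/2) − Ḡ(η_q²/2)], Y* has density c₁* Ḡ(y²/2), and RV_{(p,q)}(X) := E[(X − RVaR_{(p,q)}(X))² | η_p ≤ Y ≤ η_q] with X = μ + σY. (Equivalently, E[Y² | η_p ≤ Y ≤ η_q] = (λ + (c₁/c₁*)F_{Y*}(η_p,η_q))/F_Y(η_p,η_q) and E[Y | η_p ≤ Y ≤ η_q] = δ/F_Y(η_p,η_q).) -/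
/-! Differentiating `y ↦ Ḡ(y²/2)` gives `-y g(y²/2)`, so `Ḡ(y²/2)` is an antiderivative of
`-y f_Y(y)/c₁`. This evaluates the first truncated moment of `Y` directly, and after one
integration by parts the second truncated moment becomes boundary terms plus the integral of
`c₁ Ḡ(y²/2)`, i.e. `(c₁/c₁*) F_{Y*}`. The range variance of `μ + σY` is then `σ²` times the
truncated variance of `Y`. -/

open MeasureTheory intervalIntegral Set
open scoped Interval

theorem integrableOn_Ioi_of_integral_Ioi_ne_zero {g : ℝ → ℝ} {a u : ℝ}
    (hcont : ContinuousOn g (Ici a)) (hau : a ≤ u) (hu : ∫ v in Ioi u, g v ≠ 0) :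
    IntegrableOn g (Ioi a) := by
  have htail : IntegrableOn g (Ioi u) := by
    by_contra h
    exact hu (integral_undef h)
  have hbody : IntegrableOn g (Ioc a u) :=
    (hcont.mono Icc_subset_Ici_self).integrableOn_Icc.mono_set Ioc_subset_Icc_self
  rw [← Ioc_union_Ioi_eq_Ioi hau]
  exact hbody.union htail

theorem hasDerivWithinAt_integral_Ioi {g : ℝ → ℝ} {a u : ℝ}
    (hcont : ContinuousOn g (Ici a)) (hint : IntegrableOn g (Ioi a)) (hu : a ≤ u) :
    HasDerivWithinAt (fun x => ∫ v in Ioi x, g v) (-g u) (Ici a) u := by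
  have hrepr : ∀ x ∈ Ici a, ∫ v in Ioi x, g v = (∫ v in Ioi a, g v) - ∫ v in a..x, g v :=
    fun x hx => by rw [← integral_Ioi_sub_Ioi hint hx, sub_sub_cancel]
  have hII : IntervalIntegrable g volume a u :=
    (hcont.mono (by rw [uIcc_of_le hu]; exact Icc_subset_Ici_self)).intervalIntegrable
  have hFTC : HasDerivWithinAt (fun x => ∫ v in a..x, g v) (g u) (Ici a) u := by
    rcases hu.eq_or_lt with rfl | hau
    · exact integral_hasDerivWithinAt_right hII ⟨Ioi a, self_mem_nhdsWithin, hint.1⟩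
        ((hcont.continuousWithinAt self_mem_Ici).mono Ioi_subset_Ici_self)
    · exact (integral_hasDerivAt_right hII ⟨Ioi a, Ioi_mem_nhds hau, hint.1⟩
        (hcont.continuousAt (Ici_mem_nhds hau))).hasDerivWithinAt
  exact (hFTC.const_sub _).congr_of_mem hrepr hu

theorem hasDerivAt_integral_Ioi_sq_div_two {g : ℝ → ℝ}
    (hcont : ContinuousOn g (Ici 0)) (hint : IntegrableOn g (Ioi 0)) (y : ℝ) :
    HasDerivAt (fun x => ∫ v in Ioi (x ^ 2 / 2), g v) (-(y * g (y ^ 2 / 2))) y := by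
  have hsq : HasDerivAt (fun x : ℝ => x ^ 2 / 2) y y := by
    simpa using (hasDerivAt_pow 2 y).div_const 2
  have := (hasDerivWithinAt_integral_Ioi hcont hint (by positivity)).scomp_hasDerivAt y hsq
    fun x => show 0 ≤ x ^ 2 / 2 by positivity
  simpa [Function.comp_def] using this

section Moments

variable {φ Φ : ℝ → ℝ} {a b : ℝ}

theorem integral_id_mul_eq_of_hasDerivAt (hΦ : ∀ y ∈ [[a, b]], HasDerivAt Φ (-(y * φ y)) y)
    (hφ : IntervalIntegrable (fun y => y * φ y) volume a b) :
    ∫ y in a..b, y * φ y = Φ a - Φ b := by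
  have := integral_eq_sub_of_hasDerivAt hΦ hφ.neg
  rw [intervalIntegral.integral_neg] at this
  linarith

theorem integral_sq_mul_eq_of_hasDerivAt (hΦ : ∀ y ∈ [[a, b]], HasDerivAt Φ (-(y * φ y)) y)
    (hφ : IntervalIntegrable (fun y => y * φ y) volume a b) :
    ∫ y in a..b, y ^ 2 * φ y = a * Φ a - b * Φ b + ∫ y in a..b, Φ y := by
  have hparts := integral_mul_deriv_eq_deriv_mul (fun x _ => hasDerivAt_id x) hΦ
    intervalIntegrable_const hφ.neg
  simp only [id, one_mul, mul_neg, intervalIntegral.integral_neg] at hparts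
  simp only [sq, mul_assoc]
  linarith

end Moments

section Variance

variable {w : ℝ → ℝ} {a b : ℝ}

theorem integral_quadratic_mul (hw : IntervalIntegrable w volume a b) (α β γ : ℝ) :
    ∫ y in a..b, (α + β * y + γ * y ^ 2) * w y =
      α * (∫ y in a..b, w y) + β * (∫ y in a..b, y * w y) + γ * ∫ y in a..b, y ^ 2 * w y := by
  have h1 : IntervalIntegrable (fun y => y * w y) volume a b :=
    hw.continuousOn_mul continuousOn_id
  have h2 : IntervalIntegrable (fun y => y ^ 2 * w y) volume a b :=
    hw.continuousOn_mul (continuousOn_pow 2)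
  simp only [add_mul, mul_assoc]
  rw [integral_add ((hw.const_mul α).add (h1.const_mul β)) (h2.const_mul γ),
    integral_add (hw.const_mul α) (h1.const_mul β)]
  simp only [intervalIntegral.integral_const_mul]

/-- The variance of `μ + σY` under the weight `w` on `[a, b]` is `σ²` times that of `Y`. -/
theorem integral_affine_sub_mean_sq_mul_div (hw : IntervalIntegrable w volume a b)
    (hF : ∫ y in a..b, w y ≠ 0) (μ σ : ℝ) :
    (∫ y in a..b, (μ + σ * y - (∫ y in a..b, (μ + σ * y) * w y) / ∫ y in a..b, w y) ^ 2 * w y)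
        / (∫ y in a..b, w y) =
      σ ^ 2 / (∫ y in a..b, w y) *
        ((∫ y in a..b, y ^ 2 * w y) - (∫ y in a..b, y * w y) ^ 2 / ∫ y in a..b, w y) := by
  set F := ∫ y in a..b, w y
  set m := (∫ y in a..b, (μ + σ * y) * w y) / F with hm
  have hmean : ∫ y in a..b, (μ + σ * y) * w y = μ * F + σ * ∫ y in a..b, y * w y := by
    simpa using integral_quadratic_mul hw μ σ 0
  have hsq : ∫ y in a..b, (μ + σ * y - m) ^ 2 * w y =
      (μ - m) ^ 2 * F + 2 * σ * (μ - m) * (∫ y in a..b, y * w y) +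
        σ ^ 2 * ∫ y in a..b, y ^ 2 * w y := by
    rw [← integral_quadratic_mul hw]
    congr 1 with y
    ring
  rw [hsq, hm, hmean]
  field_simp
  ring

end Variance

theorem rv_elliptical_general
    (g : ℝ → ℝ) (hg_cont : ContinuousOn g (Set.Ici (0:ℝ)))
    (c₁ c₁s μ σ ηp ηq : ℝ)
    (hnorms : (∫ y : ℝ, c₁s * (∫ v in Set.Ioi (y ^ 2 / 2), g v)) = 1)
    (F Fs δ lam mY RV : ℝ)
    (hF : F = ∫ y in ηp..ηq, c₁ * g (y ^ 2 / 2))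
    (hFpos : 0 < F)
    (hFs : Fs = ∫ y in ηp..ηq, c₁s * (∫ v in Set.Ioi (y ^ 2 / 2), g v))
    (hδ : δ = c₁ * ((∫ v in Set.Ioi (ηp ^ 2 / 2), g v) -
      (∫ v in Set.Ioi (ηq ^ 2 / 2), g v)))
    (hlam : lam = c₁ * (ηp * (∫ v in Set.Ioi (ηp ^ 2 / 2), g v) -
      ηq * (∫ v in Set.Ioi (ηq ^ 2 / 2), g v)))
    (hmY : mY = (∫ y in ηp..ηq, (μ + σ * y) * (c₁ * g (y ^ 2 / 2))) / F)
    (hRV : RV = (∫ y in ηp..ηq, (μ + σ * y - mY) ^ 2 * (c₁ * g (y ^ 2 / 2))) / F) :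
    RV = σ ^ 2 / F * (lam + c₁ / c₁s * Fs - δ ^ 2 / F) := by
  have hc₁s : c₁s ≠ 0 := by
    rintro rfl
    simp at hnorms
  -- Since a Bochner integral of a non-integrable function is `0`, `hnorms` forces `g` to be
  -- integrable on some tail, hence on `(0, ∞)` by continuity.
  obtain ⟨y₀, hy₀⟩ : ∃ y : ℝ, ∫ v in Ioi (y ^ 2 / 2), g v ≠ 0 := by
    by_contra! h
    simp [h] at hnorms
  have hint := integrableOn_Ioi_of_integral_Ioi_ne_zero hg_cont (by positivity) hy₀
  have hΦ : ∀ y ∈ [[ηp, ηq]], HasDerivAt (fun x => c₁ * ∫ v in Ioi (x ^ 2 / 2), g v)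
      (-(y * (c₁ * g (y ^ 2 / 2)))) y := fun y _ => by
    simpa [mul_left_comm] using (hasDerivAt_integral_Ioi_sq_div_two hg_cont hint y).const_mul c₁
  have hφ : Continuous fun y : ℝ => c₁ * g (y ^ 2 / 2) :=
    continuous_const.mul <| hg_cont.comp_continuous (by fun_prop) fun y =>
      show 0 ≤ y ^ 2 / 2 by positivity
  have hyφ := (continuous_id.mul hφ).intervalIntegrable (μ := volume) ηp ηq
  have hFs' : c₁ / c₁s * Fs = ∫ y in ηp..ηq, c₁ * ∫ v in Ioi (y ^ 2 / 2), g v := by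
    rw [hFs, intervalIntegral.integral_const_mul, intervalIntegral.integral_const_mul]
    field_simp
  subst hmY hRV
  rw [hF] at hFpos ⊢
  rw [integral_affine_sub_mean_sq_mul_div (hφ.intervalIntegrable _ _) hFpos.ne',
    integral_sq_mul_eq_of_hasDerivAt hΦ hyφ, integral_id_mul_eq_of_hasDerivAt hΦ hyφ, hFs',
    hlam, hδ]
  ring

/-- Range variance of a univariate elliptical distribution: with `X = μ + σY`,
`RV_{(p,q)}(X) = (σ²/F_Y(η_p,η_q))·{λ + (c₁/c₁*)·F_{Y*}(η_p,η_q) − δ²/F_Y(η_p,η_q)}`,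
where `λ = c₁[η_p Ḡ(η_p²/2) − η_q Ḡ(η_q²/2)]`, `δ = c₁[Ḡ(η_p²/2) − Ḡ(η_q²/2)]`,
and `Y*` has density `c₁* Ḡ(y²/2)`. -/
theorem rv_elliptical
    (g : ℝ → ℝ) (hg_cont : ContinuousOn g (Set.Ici (0:ℝ)))
    (hg_nonneg : ∀ u, 0 ≤ u → 0 ≤ g u)
    (hg_int : IntegrableOn (fun s => s ^ (-(1:ℝ)/2) * g s) (Set.Ioi (0:ℝ)))
    (hG_int : IntegrableOn (fun s => s ^ (-(1:ℝ)/2) * (∫ v in Set.Ioi s, g v))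
      (Set.Ioi (0:ℝ)))
    (c₁ c₁s μ σ ηp ηq : ℝ) (hσ : 0 < σ) (hη : ηp < ηq)
    (hdens_int : Integrable (fun y => c₁ * g (y ^ 2 / 2)))
    (hnorm : (∫ y : ℝ, c₁ * g (y ^ 2 / 2)) = 1)
    (hdenss_int : Integrable (fun y => c₁s * (∫ v in Set.Ioi (y ^ 2 / 2), g v)))
    (hnorms : (∫ y : ℝ, c₁s * (∫ v in Set.Ioi (y ^ 2 / 2), g v)) = 1)
    (F Fs δ lam mY RV : ℝ)
    (hF : F = ∫ y in ηp..ηq, c₁ * g (y ^ 2 / 2))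
    (hFpos : 0 < F)
    (hFs : Fs = ∫ y in ηp..ηq, c₁s * (∫ v in Set.Ioi (y ^ 2 / 2), g v))
    (hδ : δ = c₁ * ((∫ v in Set.Ioi (ηp ^ 2 / 2), g v) -
      (∫ v in Set.Ioi (ηq ^ 2 / 2), g v)))
    (hlam : lam = c₁ * (ηp * (∫ v in Set.Ioi (ηp ^ 2 / 2), g v) -
      ηq * (∫ v in Set.Ioi (ηq ^ 2 / 2), g v)))
    (hmY : mY = (∫ y in ηp..ηq, (μ + σ * y) * (c₁ * g (y ^ 2 / 2))) / F)
    (hRV : RV = (∫ y in ηp..ηq, (μ + σ * y - mY) ^ 2 * (c₁ * g (y ^ 2 / 2))) / F) :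
    RV = σ ^ 2 / F * (lam + c₁ / c₁s * Fs - δ ^ 2 / F) :=
  rv_elliptical_general g hg_cont c₁ c₁s μ σ ηp ηq hnorms F Fs δ lam mY RV hF hFpos hFs hδ hlam hmY
    hRV
end
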